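/- For all n ≥ 1 and 1 ≤ k ≤ n, {n}! · {n-1}! = {k}! · {n-k}! · {k-1}! · {n-k+1}! · ( {n-1 choose k-1}^2 + t · {n-1 choose k} · {n-1 choose k-2} ), as an identity in the polynomial ring Z[s,t]. -/
import Mathlib


open MvPolynomial in
/-- The Lucas polynomials in `ℤ[s,t]`, where `s = X 0` and `t = X 1`:
`{0} = 0`, `{1} = 1`, `{n} = s·{n-1} + t·{n-2}`. -/
noncomputable def lucas : ℕ → MvPolynomial (Fin 2) ℤ
  | 0 => 0
  | 1 => 1
  | n + 2 => X 0 * lucas (n + 1) + X 1 * lucas n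

/-- The Lucas factorial `{n}! = {n}·{n-1}···{1}`, with `{0}! = 1`. -/
noncomputable def lucasFact : ℕ → MvPolynomial (Fin 2) ℤ
  | 0 => 1
  | n + 1 => lucas (n + 1) * lucasFact n

open MvPolynomial in
/-- Addition formula for Lucas polynomials. -/
lemma lucas_add : ∀ a b : ℕ, lucas (a + b + 1) =
    lucas (a + 1) * lucas (b + 1) + X 1 * lucas a * lucas b
  | 0, b => by simp [lucas]
  | 1, b => by
      have : 1 + b + 1 = b + 2 := by omega
      rw [this]
      simp only [lucas]
      ring
  | (a + 2), b => by
      have h1 : a + 2 + b + 1 = (a + b + 1) + 2 := by omega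
      have h2 : a + 1 + b + 1 = (a + b + 1) + 1 := by omega
      rw [h1, show lucas ((a+b+1)+2) = X 0 * lucas ((a+b+1)+1) + X 1 * lucas (a+b+1) from rfl,
        ← h2, lucas_add (a + 1) b, lucas_add a b]
      simp only [lucas]
      ring

lemma lucasFact_succ' (m : ℕ) (hm : 1 ≤ m) :
    lucasFact m = lucas m * lucasFact (m - 1) := by
  obtain ⟨j, rfl⟩ : ∃ j, m = j + 1 := ⟨m - 1, by omega⟩
  simp [lucasFact]

/-- The factorial form of the generalized Narayana recurrence, in `ℤ[s,t]`.
`L` is any function satisfying the defining property of the lucanomial coefficients. -/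
theorem lucas_factorial_identity
    (L : ℤ → ℤ → MvPolynomial (Fin 2) ℤ)
    (hL : ∀ n k : ℤ, 0 ≤ k → k ≤ n →
      lucasFact k.toNat * lucasFact (n - k).toNat * L n k = lucasFact n.toNat)
    (hL0 : ∀ n k : ℤ, ¬(0 ≤ k ∧ k ≤ n) → L n k = 0)
    (n k : ℤ) (hn : 1 ≤ n) (hk : 1 ≤ k) (hkn : k ≤ n) :
    lucasFact n.toNat * lucasFact (n - 1).toNat =
      lucasFact k.toNat * lucasFact (n - k).toNat * lucasFact (k - 1).toNat *
          lucasFact (n - k + 1).toNat *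
        ((L (n - 1) (k - 1)) ^ 2 +
          MvPolynomial.X 1 * L (n - 1) k * L (n - 1) (k - 2)) := by
  set N := n.toNat with hN
  set K := k.toNat with hK
  have hK1 : 1 ≤ K := by omega
  have hKN : K ≤ N := by omega
  have e1 : (n - 1).toNat = N - 1 := by omega
  have e2 : (n - k).toNat = N - K := by omega
  have e3 : (k - 1).toNat = K - 1 := by omega
  have e4 : (n - k + 1).toNat = N - K + 1 := by omega
  rw [e1, e2, e3, e4]
  -- hypothesis A
  have hA : lucasFact (K - 1) * lucasFact (N - K) * L (n - 1) (k - 1) =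
      lucasFact (N - 1) := by
    have := hL (n - 1) (k - 1) (by omega) (by omega)
    rwa [show (k - 1).toNat = K - 1 by omega,
      show (n - 1 - (k - 1)).toNat = N - K by omega,
      show (n - 1).toNat = N - 1 by omega] at this
  -- hypothesis B
  have hB : lucasFact K * lucasFact (N - K) * L (n - 1) k =
      lucas (N - K) * lucasFact (N - 1) := by
    rcases lt_or_eq_of_le hKN with h | h
    · have hfac : lucasFact (N - K) = lucas (N - K) * lucasFact (N - K - 1) :=
        lucasFact_succ' _ (by omega)
      have := hL (n - 1) k (by omega) (by omega)
      rw [show (k).toNat = K from rfl,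
        show (n - 1 - k).toNat = N - K - 1 by omega,
        show (n - 1).toNat = N - 1 by omega] at this
      rw [hfac]
      calc lucasFact K * (lucas (N - K) * lucasFact (N - K - 1)) * L (n - 1) k
          = lucas (N - K) * (lucasFact K * lucasFact (N - K - 1) * L (n - 1) k) := by ring
        _ = lucas (N - K) * lucasFact (N - 1) := by rw [this]
    · have hz : L (n - 1) k = 0 := hL0 _ _ (by omega)
      have hz2 : lucas (N - K) = 0 := by rw [show N - K = 0 by omega]; rfl
      rw [hz, hz2]; ring
  -- hypothesis C
  have hC : lucasFact (K - 1) * lucasFact (N - K + 1) * L (n - 1) (k - 2) =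
      lucas (K - 1) * lucasFact (N - 1) := by
    rcases lt_or_eq_of_le hk with h | h
    · have hfac : lucasFact (K - 1) = lucas (K - 1) * lucasFact (K - 2) :=
        lucasFact_succ' _ (by omega)
      have := hL (n - 1) (k - 2) (by omega) (by omega)
      rw [show (k - 2).toNat = K - 2 by omega,
        show (n - 1 - (k - 2)).toNat = N - K + 1 by omega,
        show (n - 1).toNat = N - 1 by omega] at this
      rw [hfac]
      calc lucas (K - 1) * lucasFact (K - 2) * lucasFact (N - K + 1) * L (n - 1) (k - 2)
          = lucas (K - 1) * (lucasFact (K - 2) * lucasFact (N - K + 1) * L (n - 1) (k - 2)) := by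
            ring
        _ = lucas (K - 1) * lucasFact (N - 1) := by rw [this]
    · have hz : L (n - 1) (k - 2) = 0 := hL0 _ _ (by omega)
      have hz2 : lucas (K - 1) = 0 := by rw [show K - 1 = 0 by omega]; rfl
      rw [hz, hz2]; ring
  -- factorial expansions
  have hFN : lucasFact N = lucas N * lucasFact (N - 1) := lucasFact_succ' _ (by omega)
  have hFK : lucasFact K = lucas K * lucasFact (K - 1) := lucasFact_succ' _ hK1
  have hFM : lucasFact (N - K + 1) = lucas (N - K + 1) * lucasFact (N - K) := by
    have := lucasFact_succ' (N - K + 1) (by omega)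
    rwa [show N - K + 1 - 1 = N - K by omega] at this
  -- addition formula
  have hAdd : lucas N = lucas K * lucas (N - K + 1) +
      MvPolynomial.X 1 * lucas (K - 1) * lucas (N - K) := by
    have := lucas_add (K - 1) (N - K)
    rwa [show K - 1 + (N - K) + 1 = N by omega, show K - 1 + 1 = K by omega] at this
  rw [hFN, hFK, hFM]
  rw [hFK] at hB
  rw [hFM] at hC
  set F := lucasFact (N - 1)
  set G := lucasFact (K - 1)
  set D := lucasFact (N - K)
  set a := lucas K
  set b := lucas (N - K + 1)
  set c := lucas (K - 1)
  set d := lucas (N - K)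
  set L1 := L (n - 1) (k - 1)
  set L2 := L (n - 1) k
  set L3 := L (n - 1) (k - 2)
  linear_combination F ^ 2 * hAdd - a * b * (G * D * L1 + F) * hA -
    MvPolynomial.X 1 * (G * b * D * L3) * hB - MvPolynomial.X 1 * d * F * hC
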